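/- Let S ⊆ ℝ × C([-r,0],ℝⁿ) and let f : S → ℝⁿ be continuous. Let φ ∈ C([-r,0],ℝⁿ), t₀ ∈ ℝ, T > 0, and let x : [t₀-r, t₀+T] → ℝⁿ be a continuous function with x(t₀+θ) = φ(θ) for θ ∈ [-r,0] and (t, x_t) ∈ S for all t ∈ [t₀, t₀+T]. Then the following are equivalent: (a) x is differentiable on [t₀, t₀+T] (one-sided derivatives at the endpoints) with derivative L x_t + f(t, x_t) at every t ∈ [t₀, t₀+T]; (b) x(t) = y(t - t₀) + ∫_{t₀}^t X^L(t-u) f(u, x_u) du for all t ∈ [t₀, t₀+T], where y is the mild solution of ẏ(t) = L y_t with continuous initial history φ. -/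

import Mathlib

open MeasureTheory

/-- `X` is the principal fundamental matrix solution of `ẋ(t) = L x_t`:
`X = O` on `[-r,0)`, `X` continuous on `[0,∞)`, `X(0) = I`, and for every `ξ` and
`t ≥ 0`, `X(t)ξ = ξ + L(θ ↦ ∫_0^{max(t+θ,0)} X(s)ξ ds)`. -/
def IsPFMS {𝕜 : Type*} [RCLike 𝕜] {n : ℕ} (r : ℝ)
    (L : C(Set.Icc (-r) (0:ℝ), Fin n → 𝕜) →L[𝕜] (Fin n → 𝕜))
    (X : ℝ → ((Fin n → 𝕜) →L[𝕜] (Fin n → 𝕜))) : Prop :=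
  (∀ t ∈ Set.Ico (-r) (0:ℝ), X t = 0) ∧
  ContinuousOn X (Set.Ici (0:ℝ)) ∧ X 0 = 1 ∧
  ∀ ξ : Fin n → 𝕜, ∀ t, 0 ≤ t → ∃ ψ : C(Set.Icc (-r) (0:ℝ), Fin n → 𝕜),
    (∀ θ : Set.Icc (-r) (0:ℝ), ψ θ = ∫ s in (0:ℝ)..(max (t + (θ : ℝ)) 0), X s ξ) ∧
    X t ξ = ξ + L ψ

/-- `x` is the mild solution of `ẋ(t) = L x_t` with continuous initial history `φ`:
`x = φ` on `[-r,0]`, `x` continuous on `[-r,∞)`, and `x(t) = φ(0) + L(∫_0^t x_s ds)`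
for all `t ≥ 0`. -/
def IsMildSolC {𝕜 : Type*} [RCLike 𝕜] {n : ℕ} (r : ℝ)
    (L : C(Set.Icc (-r) (0:ℝ), Fin n → 𝕜) →L[𝕜] (Fin n → 𝕜))
    (φ : C(Set.Icc (-r) (0:ℝ), Fin n → 𝕜)) (x : ℝ → Fin n → 𝕜) : Prop :=
  (∀ θ : Set.Icc (-r) (0:ℝ), x θ = φ θ) ∧
  ContinuousOn x (Set.Ici (-r)) ∧
  ∀ t, 0 ≤ t → ∃ ψ : C(Set.Icc (-r) (0:ℝ), Fin n → 𝕜),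
    (∀ θ : Set.Icc (-r) (0:ℝ), ψ θ = ∫ s in (θ : ℝ)..(t + (θ : ℝ)), x s) ∧
    x t = x 0 + L ψ

set_option linter.unusedSectionVars false
set_option linter.unusedVariables false
set_option maxHeartbeats 1000000

open Set intervalIntegral Function

namespace VOC

variable {E : Type*} [NormedAddCommGroup E] [NormedSpace ℝ E] [CompleteSpace E]

noncomputable def primit (w : C(ℝ, E)) : C(ℝ, E) :=
  ⟨fun t => ∫ s in (0:ℝ)..t, w s,
    intervalIntegral.continuous_primitive (fun a b => w.continuous.intervalIntegrable a b) 0⟩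

noncomputable def iseg (r : ℝ) (w : C(ℝ, E)) : C(ℝ, C(Icc (-r) (0:ℝ), E)) :=
  ContinuousMap.curry
    ⟨fun p : ℝ × Icc (-r) (0:ℝ) => primit w (p.1 + p.2) - primit w p.2, by fun_prop⟩

lemma iseg_apply (r : ℝ) (w : C(ℝ, E)) (t : ℝ) (θ : Icc (-r) (0:ℝ)) :
    iseg r w t θ = ∫ s in (θ:ℝ)..(t + θ), w s := by
  show (∫ s in (0:ℝ)..(t+θ), w s) - (∫ s in (0:ℝ)..(θ:ℝ), w s) = _
  rw [integral_interval_sub_left (w.continuous.intervalIntegrable _ _)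
    (w.continuous.intervalIntegrable _ _)]

def segm (r : ℝ) (w : C(ℝ, E)) : C(ℝ, C(Icc (-r) (0:ℝ), E)) :=
  ContinuousMap.curry ⟨fun p : ℝ × Icc (-r) (0:ℝ) => w (p.1 + p.2), by fun_prop⟩

lemma segm_apply (r : ℝ) (w : C(ℝ, E)) (t : ℝ) (θ : Icc (-r) (0:ℝ)) :
    segm r w t θ = w (t + θ) := rfl

lemma hasDerivAt_iseg (r : ℝ) (w : C(ℝ, E)) (t : ℝ) :
    HasDerivAt (fun t' => iseg r w t') (segm r w t) t := by
  rw [hasDerivAt_iff_isLittleO]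
  rw [Asymptotics.isLittleO_iff]
  intro ε hε
  have hK : IsCompact (Icc (t - r - 1) (t + 1)) := isCompact_Icc
  have hu : UniformContinuousOn w (Icc (t - r - 1) (t + 1)) :=
    hK.uniformContinuousOn_of_continuous w.continuous.continuousOn
  rw [Metric.uniformContinuousOn_iff] at hu
  obtain ⟨δ, hδ, hδ'⟩ := hu ε hε
  have hev : ∀ᶠ t' in nhds t, |t' - t| < min δ 1 := by
    have h2 := Metric.ball_mem_nhds t (lt_min hδ one_pos)
    filter_upwards [h2] with t' ht'
    simpa [Real.dist_eq] using ht'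
  filter_upwards [hev] with t' ht'
  rw [Real.norm_eq_abs]
  have h0 : (0:ℝ) ≤ ε * |t' - t| := mul_nonneg hε.le (abs_nonneg _)
  rw [ContinuousMap.norm_le _ h0]
  intro θ
  have hθ1 : -r ≤ (θ:ℝ) := θ.2.1
  have hθ2 : (θ:ℝ) ≤ 0 := θ.2.2
  have key : (iseg r w t' - iseg r w t - (t' - t) • segm r w t) θ
      = ∫ s in (t + θ)..(t' + θ), (w s - w (t + θ)) := by
    have h1 : (iseg r w t' - iseg r w t - (t' - t) • segm r w t) θ
        = iseg r w t' θ - iseg r w t θ - (t' - t) • segm r w t θ := rfl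
    rw [h1, iseg_apply, iseg_apply, segm_apply]
    rw [integral_sub (w.continuous.intervalIntegrable _ _)
      (continuous_const.intervalIntegrable _ _)]
    rw [intervalIntegral.integral_const]
    rw [integral_interval_sub_left (w.continuous.intervalIntegrable _ _)
      (w.continuous.intervalIntegrable _ _)]
    have h2 : t' + θ - (t + θ) = t' - t := by ring
    rw [h2]
  rw [key]
  have hmem : ∀ s ∈ Set.uIoc (t + θ) (t' + θ), ‖w s - w (t + θ)‖ ≤ ε := by
    intro s hs
    have h1 : |t' - t| < δ := lt_of_lt_of_le ht' (min_le_left _ _)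
    have h2 : |t' - t| < 1 := lt_of_lt_of_le ht' (min_le_right _ _)
    have hsmem : s ∈ Icc (t - r - 1) (t + 1) := by
      rw [Set.mem_uIoc] at hs
      constructor
      · rcases hs with h | h
        · have := h.1; nlinarith [abs_lt.mp h2]
        · have := h.1; nlinarith [abs_lt.mp h2]
      · rcases hs with h | h
        · have := h.2; nlinarith [abs_lt.mp h2]
        · have := h.2; nlinarith [abs_lt.mp h2]
    have htθ : t + θ ∈ Icc (t - r - 1) (t + 1) := by
      constructor <;> nlinarith
    have hd : dist s (t + θ) < δ := by
      rw [Real.dist_eq]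
      have hmem2 : s ∈ Set.uIoc (t + θ) (t' + θ) := hs
      rw [Set.mem_uIoc] at hmem2
      have habs : |s - (t + θ)| ≤ |t' - t| := by
        rw [abs_le]
        rcases hmem2 with h | h <;>
          constructor <;> linarith [le_abs_self (t' - t), neg_abs_le (t' - t), h.1, h.2]
      linarith
    have h3 := hδ' s hsmem (t + θ) htθ hd
    rw [dist_eq_norm] at h3
    exact h3.le
  calc ‖∫ s in (t + θ)..(t' + θ), (w s - w (t + θ))‖
      ≤ ε * |t' + θ - (t + θ)| :=
        intervalIntegral.norm_integral_le_of_norm_le_const hmem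
    _ = ε * |t' - t| := by ring_nf

lemma iseg_zero (r : ℝ) (w : C(ℝ, E)) : iseg r w 0 = 0 := by
  refine ContinuousMap.ext fun θ => ?_
  rw [iseg_apply]
  simp

lemma iseg_sub (r : ℝ) (w v : C(ℝ, E)) (t : ℝ) :
    iseg r (w - v) t = iseg r w t - iseg r v t := by
  refine ContinuousMap.ext fun θ => ?_
  show iseg r (w - v) t θ = iseg r w t θ - iseg r v t θ
  rw [iseg_apply, iseg_apply, iseg_apply,
    ← integral_sub (w.continuous.intervalIntegrable _ _) (v.continuous.intervalIntegrable _ _)]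
  rfl

lemma iseg_add (r : ℝ) (w v : C(ℝ, E)) (t : ℝ) :
    iseg r (w + v) t = iseg r w t + iseg r v t := by
  refine ContinuousMap.ext fun θ => ?_
  show iseg r (w + v) t θ = iseg r w t θ + iseg r v t θ
  rw [iseg_apply, iseg_apply, iseg_apply,
    ← integral_add (w.continuous.intervalIntegrable _ _) (v.continuous.intervalIntegrable _ _)]
  rfl

lemma mild_iff_deriv {n : ℕ} (r T : ℝ)
    (L : C(Icc (-r) (0:ℝ), Fin n → ℝ) →L[ℝ] (Fin n → ℝ))
    (w g : C(ℝ, Fin n → ℝ)) :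
    (∀ t ∈ Icc (0:ℝ) T, HasDerivWithinAt w (L (segm r w t) + g t) (Icc (0:ℝ) T) t) ↔
    (∀ t ∈ Icc (0:ℝ) T, w t = w 0 + L (iseg r w t) + ∫ s in (0:ℝ)..t, g s) := by
  set F : ℝ → (Fin n → ℝ) := fun t' => w 0 + L (iseg r w t') + ∫ s in (0:ℝ)..t', g s with hFdef
  have hF : ∀ t : ℝ, HasDerivAt F (L (segm r w t) + g t) t := by
    intro t
    have h1 : HasDerivAt (fun t' => L (iseg r w t')) (L (segm r w t)) t :=
      L.hasFDerivAt.comp_hasDerivAt t (hasDerivAt_iseg r w t)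
    have h2 : HasDerivAt (fun t' => ∫ s in (0:ℝ)..t', g s) (g t) t :=
      (g.continuous.integral_hasStrictDerivAt 0 t).hasDerivAt
    have := ((hasDerivAt_const t (w 0)).add h1).add h2
    rw [zero_add] at this
    refine this.congr_of_eventuallyEq (Filter.Eventually.of_forall fun u => ?_)
    simp [hFdef, add_assoc]
  have hF0 : F 0 = w 0 := by
    simp [hFdef, iseg_zero]
  constructor
  · intro h t ht
    have hD : ∀ s ∈ Icc (0:ℝ) T, HasDerivWithinAt (fun u => w u - F u) 0 (Icc (0:ℝ) T) s := by
      intro s hs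
      have := (h s hs).sub (hF s).hasDerivWithinAt
      rw [sub_self] at this
      exact this
    have h0T : (0:ℝ) ∈ Icc (0:ℝ) T := left_mem_Icc.2 (ht.1.trans ht.2)
    have hsm : (ContinuousLinearMap.smulRight (1 : ℝ →L[ℝ] ℝ) (0 : Fin n → ℝ)) = 0 := by
      ext u
      simp
    have hC := Convex.norm_image_sub_le_of_norm_hasFDerivWithin_le
      (f := fun u => w u - F u)
      (f' := fun _ => ContinuousLinearMap.smulRight (1 : ℝ →L[ℝ] ℝ) (0 : Fin n → ℝ)) (C := 0)
      (fun s hs => (hD s hs).hasFDerivWithinAt)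
      (fun s _ => by rw [hsm]; simp) (convex_Icc 0 T) h0T ht
    simp only [zero_mul] at hC
    have hwt : w t - F t = w 0 - F 0 := by
      have h4 := norm_le_zero_iff.mp hC
      have h2 : (w t - F t) - (w 0 - F 0) = 0 := by
        rw [← h4]
      linear_combination (norm := module) h2
    rw [hF0] at hwt
    have hfin : w t = F t := by
      have h3 : w t - F t = 0 := by rw [hwt]; simp
      linear_combination (norm := module) h3
    rw [hfin]
  · intro h t ht
    exact ((hF t).hasDerivWithinAt).congr (fun s hs => h s hs) (h t ht)

lemma norm_iseg_le (r : ℝ) (D : C(ℝ, E)) (hD0 : ∀ s : ℝ, s ≤ 0 → D s = 0)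
    (t : ℝ) (ht : 0 ≤ t) : ‖iseg r D t‖ ≤ ∫ s in (0:ℝ)..t, ‖D s‖ := by
  have hnn : (0:ℝ) ≤ ∫ s in (0:ℝ)..t, ‖D s‖ :=
    intervalIntegral.integral_nonneg ht (fun u _ => norm_nonneg _)
  rw [ContinuousMap.norm_le _ hnn]
  intro θ
  have hθ2 : (θ:ℝ) ≤ 0 := θ.2.2
  rw [iseg_apply]
  have hsplit : (∫ s in (θ:ℝ)..(t + θ), D s) = ∫ s in (0:ℝ)..(t + θ), D s := by
    have h1 : (∫ s in (θ:ℝ)..(0:ℝ), D s) = 0 := by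
      rw [intervalIntegral.integral_congr (g := fun _ => (0:E))
        (fun s hs => hD0 s (by
          rcases hs with ⟨h1, h2⟩
          exact h2.trans (max_le hθ2 le_rfl)))]
      simp
    rw [← intervalIntegral.integral_add_adjacent_intervals
      (D.continuous.intervalIntegrable (θ:ℝ) 0) (D.continuous.intervalIntegrable 0 (t+θ)), h1,
      zero_add]
  rw [hsplit]
  rcases le_or_gt (t + θ) 0 with hc | hc
  · have h5 : (∫ s in (0:ℝ)..(t + θ), D s) = 0 := by
      rw [intervalIntegral.integral_congr (g := fun _ => (0:E))
        (fun s hs => hD0 s (by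
          rcases hs with ⟨h1, h2⟩
          exact h2.trans (max_le le_rfl hc)))]
      simp
    rw [h5]
    simpa using hnn
  · calc ‖∫ s in (0:ℝ)..(t + θ), D s‖ ≤ ∫ s in (0:ℝ)..(t + θ), ‖D s‖ :=
        intervalIntegral.norm_integral_le_integral_norm hc.le
    _ ≤ ∫ s in (0:ℝ)..t, ‖D s‖ :=
        intervalIntegral.integral_mono_interval le_rfl hc.le (by linarith)
          (Filter.Eventually.of_forall fun s => norm_nonneg _)
          (D.continuous.norm.intervalIntegrable 0 t)

lemma gronwall_zero (K T : ℝ) (hK : 0 ≤ K) (D : C(ℝ, E))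
    (hle : ∀ t ∈ Icc (0:ℝ) T, ‖D t‖ ≤ K * ∫ s in (0:ℝ)..t, ‖D s‖) :
    ∀ t ∈ Icc (0:ℝ) T, D t = 0 := by
  set G : ℝ → ℝ := fun t => ∫ s in (0:ℝ)..t, ‖D s‖ with hGdef
  have hG : ∀ t : ℝ, HasDerivAt G ‖D t‖ t := fun t =>
    (D.continuous.norm.integral_hasStrictDerivAt 0 t).hasDerivAt
  set ψ : ℝ → ℝ := fun t => G t * Real.exp (-K * t) with hψdef
  have hψ : ∀ t : ℝ, HasDerivAt ψ ((‖D t‖ - K * G t) * Real.exp (-K * t)) t := by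
    intro t
    have h2 : HasDerivAt (fun t => Real.exp (-K * t)) (-K * Real.exp (-K * t)) t := by
      have h := (Real.hasDerivAt_exp (-K * t)).comp t ((hasDerivAt_id t).const_mul (-K))
      have heq : (Real.exp ∘ fun t => -K * t) = fun t => Real.exp (-K * t) := rfl
      rw [heq] at h
      exact h.congr_deriv (by ring)
    have := (hG t).mul h2
    exact this.congr_deriv (by ring)
  have hanti : AntitoneOn ψ (Icc 0 T) := by
    apply antitoneOn_of_deriv_nonpos (convex_Icc 0 T)
      (fun t _ => (hψ t).continuousAt.continuousWithinAt)
      (fun t _ => ((hψ t).differentiableAt).differentiableWithinAt)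
    intro t htint
    rw [(hψ t).deriv]
    have htmem : t ∈ Icc (0:ℝ) T := by
      rw [interior_Icc] at htint
      exact ⟨htint.1.le, htint.2.le⟩
    have := hle t htmem
    have hexp : (0:ℝ) < Real.exp (-K * t) := Real.exp_pos _
    nlinarith
  intro t ht
  have h1 : ψ t ≤ ψ 0 := hanti (left_mem_Icc.2 (ht.1.trans ht.2)) ht ht.1
  have hψ0 : ψ 0 = 0 := by simp [hψdef, hGdef]
  have hGnn : 0 ≤ G t := intervalIntegral.integral_nonneg ht.1 (fun u _ => norm_nonneg _)
  have hGz : G t = 0 := by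
    have hexp : (0:ℝ) < Real.exp (-K * t) := Real.exp_pos _
    rw [hψ0] at h1
    simp only [hψdef] at h1
    nlinarith
  have := hle t ht
  rw [show (∫ s in (0:ℝ)..t, ‖D s‖) = G t from rfl, hGz, mul_zero] at this
  exact norm_le_zero_iff.mp this

lemma triangle_swap (F : ℝ → ℝ → E) (hF : Continuous (Function.uncurry F))
    {a : ℝ} (ha : 0 ≤ a) :
    (∫ s in (0:ℝ)..a, (∫ u in (0:ℝ)..s, F s u)) = ∫ u in (0:ℝ)..a, (∫ s in u..a, F s u) := by
  set A : Set ℝ := Ioc (0:ℝ) a with hA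
  set H : ℝ → ℝ → E := fun s u => if u ≤ s then F s u else 0 with hH
  have hHind : Function.uncurry H =
      ({p : ℝ × ℝ | p.2 ≤ p.1}).indicator (Function.uncurry F) := by
    ext p
    simp only [Function.uncurry, Set.indicator_apply, Set.mem_setOf_eq, hH]
  have hmeasT : MeasurableSet {p : ℝ × ℝ | p.2 ≤ p.1} :=
    measurableSet_le measurable_snd measurable_fst
  have hFi : Integrable (Function.uncurry F)
      ((volume.restrict A).prod (volume.restrict A)) := by
    rw [Measure.prod_restrict]
    have h1 : IntegrableOn (Function.uncurry F) (Icc (0:ℝ) a ×ˢ Icc (0:ℝ) a)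
        (volume.prod volume) := by
      rw [← Measure.volume_eq_prod]
      exact hF.continuousOn.integrableOn_compact (isCompact_Icc.prod isCompact_Icc)
    rw [← Measure.volume_eq_prod]
    exact h1.mono_set (Set.prod_mono Ioc_subset_Icc_self Ioc_subset_Icc_self)
  have hHi : Integrable (Function.uncurry H)
      ((volume.restrict A).prod (volume.restrict A)) := by
    rw [hHind]
    exact hFi.indicator hmeasT
  have hswap := MeasureTheory.integral_integral_swap hHi
  have hL : (∫ s in (0:ℝ)..a, (∫ u in (0:ℝ)..s, F s u))
      = ∫ s, (∫ u, H s u ∂(volume.restrict A)) ∂(volume.restrict A) := by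
    rw [intervalIntegral.integral_of_le ha]
    apply setIntegral_congr_fun measurableSet_Ioc
    intro s hs
    have hinner : (∫ u, H s u ∂(volume.restrict A)) = ∫ u in (0:ℝ)..s, F s u := by
      have h1 : (∫ u in A, H s u) = ∫ u in A ∩ Iic s, F s u := by
        have h2 : (fun u => H s u) = (Iic s).indicator (fun u => F s u) := by
          ext u
          simp [hH, Set.indicator_apply]
        rw [h2, setIntegral_indicator measurableSet_Iic]
      rw [h1, hA, Ioc_inter_Iic, min_eq_right hs.2, intervalIntegral.integral_of_le hs.1.le]
    simpa using hinner.symm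
  have hR : (∫ u in (0:ℝ)..a, (∫ s in u..a, F s u))
      = ∫ u, (∫ s, H s u ∂(volume.restrict A)) ∂(volume.restrict A) := by
    rw [intervalIntegral.integral_of_le ha]
    apply setIntegral_congr_fun measurableSet_Ioc
    intro u hu
    have h1 : (∫ s in A, H s u) = ∫ s in A ∩ Ici u, F s u := by
      have h2 : (fun s => H s u) = (Ici u).indicator (fun s => F s u) := by
        ext s
        simp [hH, Set.indicator_apply, Set.mem_Ici]
      rw [h2, setIntegral_indicator measurableSet_Ici]
    have h2 : A ∩ Ici u = Icc u a := by
      ext s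
      simp only [hA, Set.mem_inter_iff, Set.mem_Ioc, Set.mem_Ici, Set.mem_Icc]
      constructor
      · rintro ⟨⟨_, h⟩, h'⟩; exact ⟨h', h⟩
      · rintro ⟨h, h'⟩; exact ⟨⟨lt_of_lt_of_le hu.1 h, h'⟩, h⟩
    have hinner : (∫ s in A, H s u) = ∫ s in u..a, F s u := by
      rw [h1, h2, integral_Icc_eq_integral_Ioc, ← intervalIntegral.integral_of_le hu.2]
    simpa using hinner.symm
  rw [hL, hR]
  exact hswap

noncomputable def vfun (A : C(ℝ, E →L[ℝ] E)) (g : C(ℝ, E)) : C(ℝ, E) :=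
  ⟨fun t => ∫ σ in (0:ℝ)..(max t 0), A σ (g (max t 0 - σ)),
   by
    apply intervalIntegral.continuous_parametric_intervalIntegral_of_continuous
      (f := fun t σ => A σ (g (max t 0 - σ)))
    · exact (A.continuous.comp continuous_snd).clm_apply
        (g.continuous.comp (((continuous_fst.max continuous_const)).sub continuous_snd))
    · exact continuous_id.max continuous_const⟩

lemma vfun_apply (A : C(ℝ, E →L[ℝ] E)) (g : C(ℝ, E)) (t : ℝ) :
    vfun A g t = ∫ σ in (0:ℝ)..(max t 0), A σ (g (max t 0 - σ)) := rfl

lemma vfun_nonpos (A : C(ℝ, E →L[ℝ] E)) (g : C(ℝ, E)) (t : ℝ) (ht : t ≤ 0) :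
    vfun A g t = 0 := by
  rw [vfun_apply, max_eq_right ht, intervalIntegral.integral_same]

lemma vfun_eq (A : C(ℝ, E →L[ℝ] E)) (g : C(ℝ, E)) (a : ℝ) (ha : 0 ≤ a) :
    vfun A g a = ∫ u in (0:ℝ)..a, A (a - u) (g u) := by
  rw [vfun_apply, max_eq_left ha]
  have h1 : ∀ σ : ℝ, A σ (g (a - σ)) = (fun u => A (a - u) (g u)) (a - σ) := by
    intro σ
    simp only [sub_sub_cancel]
  rw [intervalIntegral.integral_congr (g := fun σ => (fun u => A (a - u) (g u)) (a - σ))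
    (fun σ _ => h1 σ)]
  rw [intervalIntegral.integral_comp_sub_left (fun u => A (a - u) (g u)) a]
  norm_num

noncomputable def Nker (A : C(ℝ, E →L[ℝ] E)) (g : C(ℝ, E)) : C(ℝ × ℝ, E) :=
  ⟨fun p => ∫ σ in (0:ℝ)..(max p.2 0), A σ (g p.1),
   by
    apply intervalIntegral.continuous_parametric_intervalIntegral_of_continuous
      (f := fun (p : ℝ × ℝ) σ => A σ (g p.1))
    · exact (A.continuous.comp continuous_snd).clm_apply
        (g.continuous.comp (continuous_fst.fst))
    · exact continuous_snd.max continuous_const⟩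

lemma Nker_apply (A : C(ℝ, E →L[ℝ] E)) (g : C(ℝ, E)) (p : ℝ × ℝ) :
    Nker A g p = ∫ σ in (0:ℝ)..(max p.2 0), A σ (g p.1) := rfl

lemma Nker_nonpos (A : C(ℝ, E →L[ℝ] E)) (g : C(ℝ, E)) (u b : ℝ) (hb : b ≤ 0) :
    Nker A g (u, b) = 0 := by
  rw [Nker_apply]
  simp only [max_eq_right hb, intervalIntegral.integral_same]

lemma vstar (A : C(ℝ, E →L[ℝ] E)) (g : C(ℝ, E)) (a : ℝ) (ha : 0 ≤ a) :
    (∫ s in (0:ℝ)..a, vfun A g s) = ∫ u in (0:ℝ)..a, Nker A g (u, a - u) := by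
  have hF : Continuous (Function.uncurry fun s u => A (s - u) (g u)) :=
    (A.continuous.comp (continuous_fst.sub continuous_snd)).clm_apply
      (g.continuous.comp continuous_snd)
  have h1 : (∫ s in (0:ℝ)..a, vfun A g s)
      = ∫ s in (0:ℝ)..a, (∫ u in (0:ℝ)..s, A (s - u) (g u)) := by
    apply intervalIntegral.integral_congr
    intro s hs
    rw [uIcc_of_le ha] at hs
    exact vfun_eq A g s hs.1
  rw [h1, triangle_swap (fun s u => A (s - u) (g u)) hF ha]
  apply intervalIntegral.integral_congr
  intro u hu
  rw [uIcc_of_le ha] at hu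
  show (∫ s in u..a, A (s - u) (g u)) = Nker A g (u, a - u)
  rw [Nker_apply]
  have h2 : max (a - u) 0 = a - u := max_eq_left (by linarith [hu.2])
  rw [h2, intervalIntegral.integral_comp_sub_right (fun σ => A σ (g u)) u]
  norm_num

lemma iseg_vfun (r : ℝ) (A : C(ℝ, E →L[ℝ] E)) (g : C(ℝ, E)) (t : ℝ) (ht : 0 ≤ t)
    (θ : Icc (-r) (0:ℝ)) :
    iseg r (vfun A g) t θ = ∫ u in (0:ℝ)..t, Nker A g (u, t + θ - u) := by
  have hθ : (θ:ℝ) ≤ 0 := θ.2.2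
  rw [iseg_apply]
  have hz : (∫ s in (θ:ℝ)..(0:ℝ), vfun A g s) = 0 := by
    rw [intervalIntegral.integral_congr (g := fun _ => (0:E)) (fun s hs => by
      rw [uIcc_of_le hθ] at hs
      exact vfun_nonpos A g s hs.2)]
    simp
  have hsplit : (∫ s in (θ:ℝ)..(t + θ), vfun A g s) = ∫ s in (0:ℝ)..(t + θ), vfun A g s := by
    rw [← intervalIntegral.integral_add_adjacent_intervals
      ((vfun A g).continuous.intervalIntegrable (θ:ℝ) 0)
      ((vfun A g).continuous.intervalIntegrable 0 (t + θ)), hz, zero_add]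
  rw [hsplit]
  rcases le_or_gt (t + θ) 0 with hc | hc
  · have hL : (∫ s in (0:ℝ)..(t + θ), vfun A g s) = 0 := by
      rw [intervalIntegral.integral_congr (g := fun _ => (0:E)) (fun s hs => by
        rcases hs with ⟨_, h2⟩
        exact vfun_nonpos A g s (h2.trans (max_le le_rfl hc)))]
      simp
    have hR : (∫ u in (0:ℝ)..t, Nker A g (u, t + θ - u)) = 0 := by
      rw [intervalIntegral.integral_congr (g := fun _ => (0:E)) (fun u hu => by
        rw [uIcc_of_le ht] at hu
        exact Nker_nonpos A g u _ (by linarith [hu.1]))]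
      simp
    rw [hL, hR]
  · rw [vstar A g (t + θ) hc.le]
    have hz2 : (∫ u in (t + θ)..t, Nker A g (u, t + θ - u)) = 0 := by
      rw [intervalIntegral.integral_congr (g := fun _ => (0:E)) (fun u hu => by
        rw [uIcc_of_le (by linarith : t + θ ≤ t)] at hu
        exact Nker_nonpos A g u _ (by linarith [hu.1]))]
      simp
    have hint : Continuous fun u => Nker A g (u, t + θ - u) :=
      (Nker A g).continuous.comp (continuous_id.prodMk (continuous_const.sub continuous_id))
    rw [← intervalIntegral.integral_add_adjacent_intervals
      (hint.intervalIntegrable 0 (t + θ)) (hint.intervalIntegrable (t + θ) t), hz2, add_zero]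

noncomputable def Phi (r : ℝ) (A : C(ℝ, E →L[ℝ] E)) (g : C(ℝ, E)) (t : ℝ) :
    C(ℝ, C(Icc (-r) (0:ℝ), E)) :=
  ContinuousMap.curry ((Nker A g).comp
    ⟨fun p : ℝ × Icc (-r) (0:ℝ) => (p.1, t + p.2 - p.1), by fun_prop⟩)

lemma Phi_apply (r : ℝ) (A : C(ℝ, E →L[ℝ] E)) (g : C(ℝ, E)) (t u : ℝ)
    (θ : Icc (-r) (0:ℝ)) : Phi r A g t u θ = Nker A g (u, t + θ - u) := rfl

lemma iseg_vfun_int (r : ℝ) (A : C(ℝ, E →L[ℝ] E)) (g : C(ℝ, E)) (t : ℝ) (ht : 0 ≤ t) :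
    iseg r (vfun A g) t = ∫ u in (0:ℝ)..t, Phi r A g t u := by
  refine ContinuousMap.ext fun θ => ?_
  have h1 : ContinuousMap.evalCLM ℝ θ (∫ u in (0:ℝ)..t, Phi r A g t u)
      = ∫ u in (0:ℝ)..t, ContinuousMap.evalCLM ℝ θ (Phi r A g t u) :=
    ((ContinuousMap.evalCLM ℝ θ).intervalIntegral_comp_comm
      ((Phi r A g t).continuous.intervalIntegrable 0 t)).symm
  have h2 : ∀ F : C(Icc (-r) (0:ℝ), E), ContinuousMap.evalCLM ℝ θ F = F θ := fun _ => rfl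
  rw [iseg_vfun r A g t ht θ]
  have h3 : (∫ u in (0:ℝ)..t, Phi r A g t u) θ
      = ∫ u in (0:ℝ)..t, Nker A g (u, t + θ - u) := by
    rw [← h2, h1]
    apply intervalIntegral.integral_congr
    intro u _
    dsimp only
    rw [h2, Phi_apply]
  rw [h3]

lemma L_iseg_vfun {n : ℕ} (r : ℝ)
    (L : C(Icc (-r) (0:ℝ), Fin n → ℝ) →L[ℝ] (Fin n → ℝ))
    (X : ℝ → ((Fin n → ℝ) →L[ℝ] (Fin n → ℝ))) (hX : IsPFMS r L X)
    (A : C(ℝ, (Fin n → ℝ) →L[ℝ] (Fin n → ℝ))) (hA : ∀ σ : ℝ, A σ = X (max σ 0))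
    (g : C(ℝ, Fin n → ℝ)) (t : ℝ) (ht : 0 ≤ t) :
    L (iseg r (vfun A g) t) = vfun A g t - ∫ s in (0:ℝ)..t, g s := by
  rw [iseg_vfun_int r A g t ht,
    ← L.intervalIntegral_comp_comm ((Phi r A g t).continuous.intervalIntegrable 0 t)]
  have hcongr : EqOn (fun u => L (Phi r A g t u))
      (fun u => A (t - u) (g u) - g u) (uIcc 0 t) := by
    intro u hu
    rw [uIcc_of_le ht] at hu
    obtain ⟨ψ, hψ, heq⟩ := hX.2.2.2 (g u) (t - u) (by linarith [hu.2])
    have hψeq : ψ = Phi r A g t u := by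
      refine ContinuousMap.ext fun θ => ?_
      rw [hψ θ, Phi_apply, Nker_apply]
      dsimp only
      have e1 : t - u + (θ:ℝ) = t + θ - u := by ring
      rw [e1]
      apply intervalIntegral.integral_congr
      intro σ hσ
      have hσ0 : 0 ≤ σ := by
        rcases hσ with ⟨h1, _⟩
        exact (le_min le_rfl (le_max_right _ _)).trans h1
      show X σ (g u) = A σ (g u)
      rw [hA σ, max_eq_left hσ0]
    show L (Phi r A g t u) = A (t - u) (g u) - g u
    rw [← hψeq]
    have hAX : A (t - u) = X (t - u) := by
      rw [hA, max_eq_left (by linarith [hu.2])]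
    rw [hAX]
    rw [heq]
    abel
  rw [intervalIntegral.integral_congr hcongr]
  have hint1 : Continuous fun u => A (t - u) (g u) :=
    (A.continuous.comp (continuous_const.sub continuous_id)).clm_apply g.continuous
  rw [intervalIntegral.integral_sub (hint1.intervalIntegrable 0 t)
    (g.continuous.intervalIntegrable 0 t)]
  rw [← vfun_eq A g t ht]

end VOC

theorem stmt_15 {n : ℕ} (hn : 0 < n) {r : ℝ} (hr : 0 < r)
    (L : C(Set.Icc (-r) (0:ℝ), Fin n → ℝ) →L[ℝ] (Fin n → ℝ))
    (X : ℝ → ((Fin n → ℝ) →L[ℝ] (Fin n → ℝ))) (hX : IsPFMS r L X)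
    (S : Set (ℝ × C(Set.Icc (-r) (0:ℝ), Fin n → ℝ)))
    (f : ℝ × C(Set.Icc (-r) (0:ℝ), Fin n → ℝ) → (Fin n → ℝ))
    (hf : ContinuousOn f S)
    (φ : C(Set.Icc (-r) (0:ℝ), Fin n → ℝ)) (t₀ T : ℝ) (hT : 0 < T)
    (x : ℝ → Fin n → ℝ)
    (hxc : ContinuousOn x (Set.Icc (t₀ - r) (t₀ + T)))
    (hx0 : ∀ θ : Set.Icc (-r) (0:ℝ), x (t₀ + θ) = φ θ)
    (xt : ℝ → C(Set.Icc (-r) (0:ℝ), Fin n → ℝ))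
    (hxt : ∀ t ∈ Set.Icc t₀ (t₀ + T), ∀ θ : Set.Icc (-r) (0:ℝ), xt t θ = x (t + θ))
    (hS : ∀ t ∈ Set.Icc t₀ (t₀ + T), (t, xt t) ∈ S)
    (y : ℝ → Fin n → ℝ) (hy : IsMildSolC r L φ y) :
    (∀ t ∈ Set.Icc t₀ (t₀ + T),
        HasDerivWithinAt x (L (xt t) + f (t, xt t)) (Set.Icc t₀ (t₀ + T)) t) ↔
      (∀ t ∈ Set.Icc t₀ (t₀ + T),
        x t = y (t - t₀) + ∫ u in t₀..t, X (t - u) (f (u, xt u))) := by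
  classical
  have hT0 : (0:ℝ) ≤ T := hT.le
  have hr0 : (0:ℝ) ≤ r := hr.le
  have hle1 : t₀ - r ≤ t₀ + T := by linarith
  -- the clamped version of x, shifted
  set zc : C(ℝ, Fin n → ℝ) :=
    ⟨fun s => x (Set.projIcc (t₀ - r) (t₀ + T) hle1 s),
     hxc.comp_continuous (continuous_subtype_val.comp continuous_projIcc)
       (fun s => (Set.projIcc (t₀ - r) (t₀ + T) hle1 s).2)⟩ with hzcdef
  have hzcval : ∀ s ∈ Icc (t₀ - r) (t₀ + T), zc s = x s := by
    intro s hs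
    show x (Set.projIcc (t₀ - r) (t₀ + T) hle1 s) = x s
    rw [Set.projIcc_of_mem hle1 hs]
  set zs : C(ℝ, Fin n → ℝ) := zc.comp ⟨fun τ => t₀ + τ, by fun_prop⟩ with hzsdef
  have hzs : ∀ τ ∈ Icc (-r) T, zs τ = x (t₀ + τ) := by
    intro τ hτ
    exact hzcval (t₀ + τ) ⟨by linarith [hτ.1], by linarith [hτ.2]⟩
  have hseg : ∀ τ ∈ Icc (0:ℝ) T, VOC.segm r zs τ = xt (t₀ + τ) := by
    intro τ hτ
    refine ContinuousMap.ext fun θ => ?_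
    have hθ1 : -r ≤ (θ:ℝ) := θ.2.1
    have hθ2 : (θ:ℝ) ≤ 0 := θ.2.2
    rw [VOC.segm_apply, hzs (τ + θ) ⟨by linarith [hτ.1], by linarith [hτ.2]⟩,
      hxt (t₀ + τ) ⟨by linarith [hτ.1], by linarith [hτ.2]⟩ θ]
    congr 1
    ring
  -- clamped projection onto [0, T]
  have hcontp : Continuous fun τ : ℝ => ((Set.projIcc 0 T hT0 τ : Icc (0:ℝ) T) : ℝ) :=
    continuous_subtype_val.comp continuous_projIcc
  have hmemp : ∀ τ : ℝ, ((Set.projIcc 0 T hT0 τ : Icc (0:ℝ) T) : ℝ) ∈ Icc (0:ℝ) T :=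
    fun τ => (Set.projIcc 0 T hT0 τ).2
  have hprojeq : ∀ τ ∈ Icc (0:ℝ) T, ((Set.projIcc 0 T hT0 τ : Icc (0:ℝ) T) : ℝ) = τ := by
    intro τ hτ
    rw [Set.projIcc_of_mem hT0 hτ]
  -- the forcing function
  set gc : C(ℝ, Fin n → ℝ) :=
    ⟨fun τ => f (t₀ + ((Set.projIcc 0 T hT0 τ : Icc (0:ℝ) T) : ℝ),
        VOC.segm r zs ((Set.projIcc 0 T hT0 τ : Icc (0:ℝ) T) : ℝ)),
     by
      apply hf.comp_continuous
      · exact (continuous_const.add hcontp).prodMk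
          ((VOC.segm r zs).continuous.comp hcontp)
      · intro τ
        have h1 := hmemp τ
        rw [hseg _ h1]
        exact hS _ ⟨by linarith [h1.1], by linarith [h1.2]⟩⟩ with hgcdef
  have hgc : ∀ τ ∈ Icc (0:ℝ) T, gc τ = f (t₀ + τ, xt (t₀ + τ)) := by
    intro τ hτ
    show f (t₀ + ((Set.projIcc 0 T hT0 τ : Icc (0:ℝ) T) : ℝ),
        VOC.segm r zs ((Set.projIcc 0 T hT0 τ : Icc (0:ℝ) T) : ℝ)) = _
    rw [hprojeq τ hτ, hseg τ hτ]
  -- continuous extension of X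
  set Ac : C(ℝ, (Fin n → ℝ) →L[ℝ] (Fin n → ℝ)) :=
    ⟨fun σ => X (max σ 0),
     hX.2.1.comp_continuous (continuous_id.max continuous_const)
       (fun σ => le_max_right σ 0)⟩ with hAcdef
  have hA : ∀ σ : ℝ, Ac σ = X (max σ 0) := fun _ => rfl
  -- continuous extension of y
  set yc : C(ℝ, Fin n → ℝ) :=
    ⟨fun s => y (max s (-r)),
     hy.2.1.comp_continuous (continuous_id.max continuous_const)
       (fun s => le_max_right s (-r))⟩ with hycdef
  have hyc : ∀ s : ℝ, -r ≤ s → yc s = y s := by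
    intro s hs
    show y (max s (-r)) = y s
    rw [max_eq_left hs]
  have ymild : ∀ t : ℝ, 0 ≤ t → yc t = yc 0 + L (VOC.iseg r yc t) := by
    intro t ht
    obtain ⟨ψ, hψ, heq⟩ := hy.2.2 t ht
    have hψeq : ψ = VOC.iseg r yc t := by
      refine ContinuousMap.ext fun θ => ?_
      rw [hψ θ, VOC.iseg_apply]
      apply intervalIntegral.integral_congr
      intro s hs
      rw [uIcc_of_le (by linarith : (θ:ℝ) ≤ t + θ)] at hs
      exact (hyc s (le_trans θ.2.1 hs.1)).symm
    rw [hyc t (by linarith), hyc 0 (by linarith), ← hψeq]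
    exact heq
  -- candidate solution
  set wc : C(ℝ, Fin n → ℝ) := yc + VOC.vfun Ac gc with hwcdef
  have hwcval : ∀ s : ℝ, wc s = yc s + VOC.vfun Ac gc s := fun _ => rfl
  have hwc0 : wc 0 = yc 0 := by
    rw [hwcval, VOC.vfun_nonpos Ac gc 0 le_rfl, add_zero]
  have wmild : ∀ t : ℝ, 0 ≤ t →
      wc t = wc 0 + L (VOC.iseg r wc t) + ∫ s in (0:ℝ)..t, gc s := by
    intro t ht
    have h1 := ymild t ht
    have h2 := VOC.L_iseg_vfun r L X hX Ac hA gc t ht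
    rw [hwcval, hwc0, hwcdef, VOC.iseg_add, map_add]
    linear_combination (norm := module) h1 - h2
  -- zs and wc agree on nonpositive times
  have hzsneg : ∀ s : ℝ, s ≤ 0 → zs s = wc s := by
    intro s hs
    rcases le_or_gt s (-r) with h | h
    · have hz1 : zs s = x (t₀ - r) := by
        show zc (t₀ + s) = x (t₀ - r)
        have : Set.projIcc (t₀ - r) (t₀ + T) hle1 (t₀ + s)
            = ⟨t₀ - r, left_mem_Icc.2 hle1⟩ := by
          apply Set.projIcc_of_le_left
          linarith
        show x (Set.projIcc (t₀ - r) (t₀ + T) hle1 (t₀ + s)) = x (t₀ - r)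
        rw [this]
      have hmr : (-r) ∈ Icc (-r) (0:ℝ) := ⟨le_rfl, by linarith⟩
      have hz2 : x (t₀ - r) = φ ⟨-r, hmr⟩ := by
        have := hx0 ⟨-r, hmr⟩
        simpa [sub_eq_add_neg] using this
      have hw1 : wc s = y (-r) := by
        rw [hwcval, VOC.vfun_nonpos Ac gc s hs, add_zero]
        show y (max s (-r)) = y (-r)
        rw [max_eq_right h]
      have hw2 : y (-r) = φ ⟨-r, hmr⟩ := hy.1 ⟨-r, hmr⟩
      rw [hz1, hz2, hw1, hw2]
    · have hsm : s ∈ Icc (-r) (0:ℝ) := ⟨h.le, hs⟩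
      have hz1 : zs s = φ ⟨s, hsm⟩ := by
        rw [hzs s ⟨h.le, by linarith⟩]
        exact hx0 ⟨s, hsm⟩
      have hw1 : wc s = φ ⟨s, hsm⟩ := by
        rw [hwcval, VOC.vfun_nonpos Ac gc s hs, add_zero, hyc s h.le]
        exact hy.1 ⟨s, hsm⟩
      rw [hz1, hw1]
  -- the two key equivalences
  have keymild : (∀ τ ∈ Icc (0:ℝ) T, zs τ = wc τ) ↔
      (∀ τ ∈ Icc (0:ℝ) T, zs τ = zs 0 + L (VOC.iseg r zs τ) + ∫ s in (0:ℝ)..τ, gc s) := by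
    constructor
    · intro hW τ hτ
      have hzw : ∀ s ∈ Icc (-r) T, zs s = wc s := by
        intro s hs
        rcases le_or_gt s 0 with h | h
        · exact hzsneg s h
        · exact hW s ⟨h.le, hs.2⟩
      have hisg : VOC.iseg r zs τ = VOC.iseg r wc τ := by
        refine ContinuousMap.ext fun θ => ?_
        rw [VOC.iseg_apply, VOC.iseg_apply]
        apply intervalIntegral.integral_congr
        intro s hs
        rw [uIcc_of_le (by linarith [hτ.1] : (θ:ℝ) ≤ τ + θ)] at hs
        exact hzw s ⟨le_trans θ.2.1 hs.1, by linarith [hs.2, hτ.2, θ.2.2]⟩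
      rw [hW τ hτ, hzw 0 ⟨by linarith, hT0⟩, hisg]
      exact wmild τ hτ.1
    · intro hM τ hτ
      set D : C(ℝ, Fin n → ℝ) := zs - wc with hDdef
      have hDval : ∀ s : ℝ, D s = zs s - wc s := fun _ => rfl
      have hD0 : ∀ s : ℝ, s ≤ 0 → D s = 0 := by
        intro s hs
        rw [hDval, hzsneg s hs, sub_self]
      have h00 : zs 0 = wc 0 := hzsneg 0 le_rfl
      have hmildD : ∀ σ ∈ Icc (0:ℝ) T, D σ = L (VOC.iseg r D σ) := by
        intro σ hσ
        have h1 := hM σ hσ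
        have h2 := wmild σ hσ.1
        rw [hDval, hDdef, VOC.iseg_sub, map_sub]
        rw [h00] at h1
        linear_combination (norm := module) h1 - h2
      have hgron : ∀ σ ∈ Icc (0:ℝ) T, ‖D σ‖ ≤ ‖L‖ * ∫ s in (0:ℝ)..σ, ‖D s‖ := by
        intro σ hσ
        rw [hmildD σ hσ]
        calc ‖L (VOC.iseg r D σ)‖ ≤ ‖L‖ * ‖VOC.iseg r D σ‖ := L.le_opNorm _
          _ ≤ ‖L‖ * ∫ s in (0:ℝ)..σ, ‖D s‖ :=
            mul_le_mul_of_nonneg_left (VOC.norm_iseg_le r D hD0 σ hσ.1) (norm_nonneg L)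
      have hz := VOC.gronwall_zero ‖L‖ T (norm_nonneg L) D hgron τ hτ
      rw [hDval] at hz
      exact sub_eq_zero.mp hz
  have keyb : ∀ t ∈ Icc t₀ (t₀ + T),
      ((x t = y (t - t₀) + ∫ u in t₀..t, X (t - u) (f (u, xt u))) ↔
        zs (t - t₀) = wc (t - t₀)) := by
    intro t ht
    have hτ : t - t₀ ∈ Icc (0:ℝ) T := ⟨by linarith [ht.1], by linarith [ht.2]⟩
    have e1 : zs (t - t₀) = x t := by
      rw [hzs (t - t₀) ⟨by linarith [hτ.1], hτ.2⟩]
      congr 1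
      ring
    have e2 : yc (t - t₀) = y (t - t₀) := hyc _ (by linarith [hτ.1])
    have e3 : VOC.vfun Ac gc (t - t₀) = ∫ u in t₀..t, X (t - u) (f (u, xt u)) := by
      rw [VOC.vfun_apply, max_eq_left hτ.1]
      have hcongr : EqOn (fun σ => Ac σ (gc (t - t₀ - σ)))
          (fun σ => (fun u => X (t - u) (f (u, xt u))) (t - σ)) (uIcc 0 (t - t₀)) := by
        intro σ hσ
        rw [uIcc_of_le hτ.1] at hσ
        dsimp only
        have h4 : t - t₀ - σ ∈ Icc (0:ℝ) T := ⟨by linarith [hσ.2], by linarith [hσ.1, hτ.2]⟩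
        rw [hgc _ h4, hA σ, max_eq_left hσ.1]
        have h5 : t - (t - σ) = σ := by ring
        have h6 : t₀ + (t - t₀ - σ) = t - σ := by ring
        rw [h5, h6]
      rw [intervalIntegral.integral_congr hcongr,
        intervalIntegral.integral_comp_sub_left (fun u => X (t - u) (f (u, xt u))) t]
      have h7 : t - (t - t₀) = t₀ := by ring
      have h8 : t - 0 = t := by ring
      rw [h7, h8]
    rw [hwcval, e1, e2, e3]
  -- the derivative statement transported
  have keyderiv : (∀ t ∈ Icc t₀ (t₀ + T),
      HasDerivWithinAt x (L (xt t) + f (t, xt t)) (Icc t₀ (t₀ + T)) t) ↔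
      (∀ τ ∈ Icc (0:ℝ) T,
        HasDerivWithinAt zs (L (VOC.segm r zs τ) + gc τ) (Icc (0:ℝ) T) τ) := by
    constructor
    · intro h τ hτ
      have ht' : t₀ + τ ∈ Icc t₀ (t₀ + T) := ⟨by linarith [hτ.1], by linarith [hτ.2]⟩
      have hx' := h (t₀ + τ) ht'
      have hg : HasDerivWithinAt (fun τ' : ℝ => t₀ + τ') 1 (Icc (0:ℝ) T) τ :=
        ((hasDerivAt_id τ).const_add t₀).hasDerivWithinAt
      have hmap : MapsTo (fun τ' : ℝ => t₀ + τ') (Icc (0:ℝ) T) (Icc t₀ (t₀ + T)) := by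
        intro s hs
        simp only [Set.mem_Icc] at hs ⊢
        constructor <;> linarith
      have hcomp := HasDerivWithinAt.scomp τ hx' hg hmap
      simp only [one_smul] at hcomp
      have hcongr : ∀ s ∈ Icc (0:ℝ) T, zs s = (x ∘ fun τ' : ℝ => t₀ + τ') s :=
        fun s hs => hzs s ⟨by linarith [hs.1], hs.2⟩
      have hfin := hcomp.congr hcongr (hcongr τ hτ)
      rw [hseg τ hτ, hgc τ hτ]
      exact hfin
    · intro h t ht
      have hτ : t - t₀ ∈ Icc (0:ℝ) T := ⟨by linarith [ht.1], by linarith [ht.2]⟩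
      have hz' := h (t - t₀) hτ
      have hg : HasDerivWithinAt (fun s : ℝ => s - t₀) 1 (Icc t₀ (t₀ + T)) t :=
        ((hasDerivAt_id t).sub_const t₀).hasDerivWithinAt
      have hmap : MapsTo (fun s : ℝ => s - t₀) (Icc t₀ (t₀ + T)) (Icc (0:ℝ) T) := by
        intro s hs
        simp only [Set.mem_Icc] at hs ⊢
        constructor <;> linarith
      have hcomp := HasDerivWithinAt.scomp t hz' hg hmap
      simp only [one_smul] at hcomp
      have hcongr : ∀ s ∈ Icc t₀ (t₀ + T), x s = (⇑zs ∘ fun s : ℝ => s - t₀) s := by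
        intro s hs
        show x s = zs (s - t₀)
        rw [hzs (s - t₀) ⟨by linarith [hs.1], by linarith [hs.2]⟩]
        congr 1
        ring
      have h9 := hcomp.congr hcongr (hcongr t ht)
      rw [hseg _ hτ, hgc _ hτ] at h9
      have e : t₀ + (t - t₀) = t := by ring
      rw [e] at h9
      exact h9
  have hDaMa := VOC.mild_iff_deriv r T L zs gc
  constructor
  · intro h1 t ht
    have hMa := hDaMa.mp (keyderiv.mp h1)
    have hWb := keymild.mpr hMa
    exact (keyb t ht).mpr (hWb (t - t₀) ⟨by linarith [ht.1], by linarith [ht.2]⟩)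
  · intro h2
    apply keyderiv.mpr
    apply hDaMa.mpr
    apply keymild.mp
    intro τ hτ
    have hmem : t₀ + τ ∈ Icc t₀ (t₀ + T) := ⟨by linarith [hτ.1], by linarith [hτ.2]⟩
    have := (keyb (t₀ + τ) hmem).mp (h2 (t₀ + τ) hmem)
    simpa [add_sub_cancel_left] using this
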